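/- Let A(1) ≠ A(2) be two obligors and z ∈ [0,1]. Then E[D_{A(1)} D_{A(2)} · z^X] = E[p_{A(1)}^S p_{A(2)}^S · z^X] · H_{A(1)}(z) · H_{A(2)}(z). -/

import Mathlib

/-!
Everything is computed in `ℝ≥0∞`, where sums and integrals commute freely. Splitting on the
value `d` of the default vector, `z ^ X` becomes `∏_A ∏_{i < d_A} z ^ ℰ_{A,i}`; by the
independence of the exposures from `(D, S)` this contributes `∏_A H_A(z) ^ d_A`, and the
conditional Poisson law of `D` given `S` then gives
`E[g(D, S) z^X] = E[∑_d g(d, S) ∏_A Po(p_A^S)(d_A) H_A(z) ^ d_A]`.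
For `g = ∏_{A ∈ T} D_A` the sum factorizes over obligors, and the Poisson identity
`∑_n n Po(r)(n) x^n = r x ∑_n Po(r)(n) x^n` turns each factor `D_A`, `A ∈ T`, into
`p_A^S H_A(z)`. Taking `T = {A(1), A(2)}`, and `T = ∅` with the weight `p_{A(1)}^S p_{A(2)}^S`,
both sides of the theorem become the same integral, up to the factor `H_{A(1)}(z) H_{A(2)}(z)`.
-/

open MeasureTheory ProbabilityTheory Real Finset

/-- The CreditRisk+ model with random severities: `P` is a probability measure; the
economic factors `S 0, ..., S N` are independent, `S 0 = 1` is constant and `S (k+1)` is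
Gamma distributed with shape `shape k` and rate `rate k` (scale `1 / rate k`);
conditionally on `S` the approximate default indicators `(D A)_A` are independent
Poisson variables with intensities `p_A^S = p A * ∑ k, w A k * S k` (this is expressed by
the factorization of the joint conditional pmf); for each obligor `A` the exposures
`E A i`, `i = 0, 1, 2, ...` are i.i.d. copies of `ℰ_A := E A 0`, and the whole family of
exposures is mutually independent and independent of `(D, S)`. -/
def IsCRModel {Ω : Type} [MeasurableSpace Ω] (P : Measure Ω) {N : ℕ} {𝒜 : Type}
    [Fintype 𝒜] (S : Fin (N + 1) → Ω → ℝ) (D : 𝒜 → Ω → ℕ) (E : 𝒜 → ℕ → Ω → ℕ)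
    (p : 𝒜 → ℝ) (w : 𝒜 → Fin (N + 1) → ℝ) (shape rate : Fin N → ℝ) : Prop :=
  IsProbabilityMeasure P ∧
  (∀ k, Measurable (S k)) ∧ (∀ A, Measurable (D A)) ∧ (∀ A i, Measurable (E A i)) ∧
  (∀ ω, S 0 ω = 1) ∧
  iIndepFun (m := fun _ => inferInstance) S P ∧
  (∀ k : Fin N, P.map (S k.succ) = gammaMeasure (shape k) (rate k)) ∧
  (∀ (d : 𝒜 → ℕ) (B : Set (Fin (N + 1) → ℝ)), MeasurableSet B →
    P ({ω | ∀ A, D A ω = d A} ∩ {ω | (fun k => S k ω) ∈ B})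
      = ∫⁻ ω in {ω | (fun k => S k ω) ∈ B},
          ∏ A, ENNReal.ofReal
            (poissonPMFReal (p A * ∑ k, w A k * S k ω).toNNReal (d A)) ∂P) ∧
  (∀ A i, P.map (E A i) = P.map (E A 0)) ∧
  iIndepFun (β := fun j : (𝒜 × ℕ) ⊕ Unit =>
      Sum.elim (fun _ => ℕ) (fun _ => ((𝒜 → ℕ) × (Fin (N + 1) → ℝ))) j)
    (m := fun j => Sum.rec (fun _ => inferInstanceAs (MeasurableSpace ℕ))
      (fun _ => inferInstanceAs (MeasurableSpace ((𝒜 → ℕ) × (Fin (N + 1) → ℝ)))) j)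
    (fun j => Sum.rec (fun Ai => E Ai.1 Ai.2)
      (fun _ ω => ((fun A => D A ω), (fun k => S k ω))) j) P

/-- The portfolio loss `X = ∑ A, ∑_{i=1}^{D A} ℰ_{A,i}`. -/
def portfolioLoss {Ω : Type} {𝒜 : Type} [Fintype 𝒜]
    (D : 𝒜 → Ω → ℕ) (E : 𝒜 → ℕ → Ω → ℕ) (ω : Ω) : ℕ :=
  ∑ A, ∑ i ∈ Finset.range (D A ω), E A i ω

/-- The probability generating function `z ↦ 𝔼[z^Y]` of an `ℕ`-valued random variable. -/
noncomputable def pgfN {Ω : Type} [MeasurableSpace Ω] (P : Measure Ω) (Y : Ω → ℕ)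
    (z : ℝ) : ℝ :=
  ∫ ω, z ^ Y ω ∂P

/-- The sector default intensity `μ_k = ∑ A, w A k * p A`. -/
def sectorIntensity {𝒜 : Type} [Fintype 𝒜] {N : ℕ} (p : 𝒜 → ℝ)
    (w : 𝒜 → Fin (N + 1) → ℝ) (k : Fin (N + 1)) : ℝ :=
  ∑ A, w A k * p A

/-- The sector polynomial `Q_k(z) = μ_k⁻¹ * ∑ A, w A k * p A * H_A(z)`, where
`H_A` is the pgf of `ℰ_A = E A 0`. -/
noncomputable def sectorPoly {Ω : Type} {𝒜 : Type} [MeasurableSpace Ω] [Fintype 𝒜]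
    {N : ℕ} (P : Measure Ω) (E : 𝒜 → ℕ → Ω → ℕ) (p : 𝒜 → ℝ)
    (w : 𝒜 → Fin (N + 1) → ℝ) (k : Fin (N + 1)) (z : ℝ) : ℝ :=
  (sectorIntensity p w k)⁻¹ * ∑ A, w A k * p A * pgfN P (E A 0) z

/-- The `j`-th unit vector in `ℝ^N`. -/
def unitVec {N : ℕ} (j : Fin N) : Fin N → ℝ := fun k => if k = j then 1 else 0

open scoped ENNReal NNReal

set_option linter.deprecated false

theorem ENNReal.tsum_pi_prod {ι κ : Type*} [Fintype ι] (F : ι → κ → ℝ≥0∞) :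
    ∑' d : ι → κ, ∏ i, F i (d i) = ∏ i, ∑' n, F i n := by
  revert F
  refine Fintype.induction_empty_option
    (P := fun ι _ => ∀ F : ι → κ → ℝ≥0∞, ∑' d : ι → κ, ∏ i, F i (d i) = ∏ i, ∑' n, F i n)
    ?_ ?_ ?_ ι
  · intro α β _ e ih F
    let := Fintype.ofEquiv β e.symm
    rw [← (e.arrowCongr (Equiv.refl κ)).tsum_eq]
    simpa [← e.prod_comp] using ih (fun a => F (e a))
  · intro F
    simp
  · intro α _ ih F
    rw [← (Equiv.piOptionEquivProd (β := fun _ => κ)).symm.tsum_eq, ENNReal.tsum_prod']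
    simp [Fintype.prod_option, ENNReal.tsum_mul_left, ENNReal.tsum_mul_right, ih]

theorem setLIntegral_comp_eq_lintegral_density_mul {Ω γ : Type*} [MeasurableSpace Ω]
    [MeasurableSpace γ] {P : Measure Ω} {X : Ω → γ} (hX : Measurable X) {s : Set Ω}
    {ρ : Ω → ℝ≥0∞} (hρ : Measurable ρ)
    (hs : ∀ B, MeasurableSet B → P (s ∩ X ⁻¹' B) = ∫⁻ ω in X ⁻¹' B, ρ ω ∂P)
    {G : γ → ℝ≥0∞} (hG : Measurable G) :
    ∫⁻ ω in s, G (X ω) ∂P = ∫⁻ ω, ρ ω * G (X ω) ∂P := by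
  have hmap : (P.restrict s).map X = (P.withDensity ρ).map X := by
    ext B hB
    rw [Measure.map_apply hX hB, Measure.map_apply hX hB, Measure.restrict_apply (hX hB),
      Set.inter_comm, withDensity_apply _ (hX hB), hs B hB]
  rw [← lintegral_map hG hX, hmap, lintegral_map hG hX]
  exact lintegral_withDensity_eq_lintegral_mul _ hρ (hG.comp hX)

theorem ae_nonneg_of_map_eq_gammaMeasure {Ω : Type*} [MeasurableSpace Ω] {P : Measure Ω}
    {X : Ω → ℝ} (hX : Measurable X) {a r : ℝ} (h : P.map X = gammaMeasure a r) :
    ∀ᵐ ω ∂P, 0 ≤ X ω := by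
  have : P (X ⁻¹' Set.Iio 0) = 0 := by
    rw [← Measure.map_apply hX measurableSet_Iio, h, gammaMeasure,
      withDensity_apply _ measurableSet_Iio]
    exact lintegral_gammaPDF_of_nonpos le_rfl
  simpa [ae_iff, Set.preimage] using this

theorem integral_mul_pow_eq_toReal_lintegral {Ω : Type*} [MeasurableSpace Ω] {P : Measure Ω}
    {f : Ω → ℝ} (hf : 0 ≤ᵐ[P] f) (hfm : AEMeasurable f P) {Y : Ω → ℕ} (hY : Measurable Y)
    {z : ℝ} (hz : 0 ≤ z) :
    ∫ ω, f ω * z ^ Y ω ∂P = (∫⁻ ω, ENNReal.ofReal (f ω) * ENNReal.ofReal z ^ Y ω ∂P).toReal := by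
  have hm : AEMeasurable (fun ω => f ω * z ^ Y ω) P :=
    hfm.mul (measurable_from_top.comp hY).aemeasurable
  rw [integral_eq_lintegral_of_nonneg_ae
    (by filter_upwards [hf] with ω h using mul_nonneg h (pow_nonneg hz _)) hm.aestronglyMeasurable]
  congr 1
  refine lintegral_congr_ae ?_
  filter_upwards [hf] with ω h
  rw [ENNReal.ofReal_mul h, ENNReal.ofReal_pow hz]

theorem pgfN_eq_toReal_lintegral {Ω : Type} [MeasurableSpace Ω] {P : Measure Ω} {Y : Ω → ℕ}
    (hY : Measurable Y) {z : ℝ} (hz : 0 ≤ z) :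
    pgfN P Y z = (∫⁻ ω, ENNReal.ofReal z ^ Y ω ∂P).toReal := by
  simpa [pgfN] using integral_mul_pow_eq_toReal_lintegral (f := fun _ => 1)
    (ae_of_all _ fun _ => zero_le_one) aemeasurable_const hY hz

noncomputable def poissonPGF (r : ℝ≥0) (x : ℝ≥0∞) : ℝ≥0∞ :=
  ∑' n : ℕ, ENNReal.ofReal (poissonPMFReal r n) * x ^ n

theorem measurable_ofReal_poissonPMFReal (n : ℕ) :
    Measurable fun r => ENNReal.ofReal (poissonPMFReal r n) := by
  unfold poissonPMFReal
  fun_prop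

theorem measurable_poissonPGF (x : ℝ≥0∞) : Measurable fun r => poissonPGF r x :=
  Measurable.ennreal_tsum fun n => (measurable_ofReal_poissonPMFReal n).mul_const _

theorem natCast_succ_mul_poissonPMFReal_succ (r : ℝ≥0) (n : ℕ) :
    ((n + 1 : ℕ) : ℝ≥0∞) * ENNReal.ofReal (poissonPMFReal r (n + 1))
      = r * ENNReal.ofReal (poissonPMFReal r n) := by
  rw [← ENNReal.ofReal_natCast, ← ENNReal.ofReal_mul (by positivity),
    ← ENNReal.ofReal_coe_nnreal, ← ENNReal.ofReal_mul (by positivity)]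
  congr 1
  simp only [poissonPMFReal, Nat.factorial_succ]
  push_cast
  field_simp
  ring

theorem tsum_natCast_mul_poissonPMFReal_mul_pow (r : ℝ≥0) (x : ℝ≥0∞) :
    ∑' n : ℕ, (n : ℝ≥0∞) * (ENNReal.ofReal (poissonPMFReal r n) * x ^ n)
      = r * x * poissonPGF r x := by
  rw [poissonPGF, tsum_eq_zero_add' ENNReal.summable, Nat.cast_zero, zero_mul, zero_add,
    ← ENNReal.tsum_mul_left]
  refine tsum_congr fun n => ?_
  rw [← mul_assoc, natCast_succ_mul_poissonPMFReal_succ, pow_succ]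
  ring

theorem tsum_prod_natCast_mul_prod_poissonPMFReal {ι : Type*} [Fintype ι] [DecidableEq ι]
    (T : Finset ι) (r : ι → ℝ≥0) (x : ι → ℝ≥0∞) :
    ∑' d : ι → ℕ, (∏ i ∈ T, (d i : ℝ≥0∞))
        * ∏ i, ENNReal.ofReal (poissonPMFReal (r i) (d i)) * x i ^ d i
      = (∏ i ∈ T, (r i : ℝ≥0∞) * x i) * ∏ i, poissonPGF (r i) (x i) := by
  have hT (f : ι → ℝ≥0∞) : ∏ i ∈ T, f i = ∏ i, if i ∈ T then f i else 1 := by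
    rw [prod_ite_mem, univ_inter]
  simp only [hT, ← prod_mul_distrib]
  refine (ENNReal.tsum_pi_prod fun i (n : ℕ) => (if i ∈ T then (n : ℝ≥0∞) else 1)
    * (ENNReal.ofReal (poissonPMFReal (r i) n) * x i ^ n)).trans (prod_congr rfl fun i _ => ?_)
  split_ifs
  · exact tsum_natCast_mul_poissonPMFReal_mul_pow (r i) (x i)
  · simp [poissonPGF]

def defaultIntensity {𝒜 : Type} {N : ℕ} (p : 𝒜 → ℝ) (w : 𝒜 → Fin (N + 1) → ℝ) (A : 𝒜)
    (s : Fin (N + 1) → ℝ) : ℝ≥0 :=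
  (p A * ∑ k, w A k * s k).toNNReal

theorem measurable_defaultIntensity {𝒜 : Type} {N : ℕ} (p : 𝒜 → ℝ)
    (w : 𝒜 → Fin (N + 1) → ℝ) (A : 𝒜) : Measurable (defaultIntensity p w A) := by
  unfold defaultIntensity
  fun_prop

section CreditRiskPlus

variable {Ω 𝒜 : Type} [MeasurableSpace Ω] [Fintype 𝒜] {P : Measure Ω} {N : ℕ}
  {S : Fin (N + 1) → Ω → ℝ} {D : 𝒜 → Ω → ℕ} {E : 𝒜 → ℕ → Ω → ℕ} {p : 𝒜 → ℝ}
  {w : 𝒜 → Fin (N + 1) → ℝ} {shape rate : Fin N → ℝ}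

theorem measurable_portfolioLoss (hD : ∀ A, Measurable (D A))
    (hE : ∀ A i, Measurable (E A i)) : Measurable (portfolioLoss D E) := by
  refine Finset.measurable_sum _ fun A _ => ?_
  have h : Measurable fun x : ℕ × Ω => ∑ i ∈ range x.1, E A i x.2 :=
    measurable_from_prod_countable_right fun n =>
      Finset.measurable_sum (range n) fun i _ => hE A i
  exact h.comp ((hD A).prodMk measurable_id)

theorem measurableSet_defaults (hD : ∀ A, Measurable (D A)) (d : 𝒜 → ℕ) :
    MeasurableSet {ω | ∀ A, D A ω = d A} := by
  simp only [Set.setOf_forall]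
  exact MeasurableSet.iInter fun A => measurableSet_eq_fun (hD A) measurable_const

theorem IsCRModel.ae_nonneg_intensity (hM : IsCRModel P S D E p w shape rate)
    (hp : ∀ A, 0 ≤ p A) (hw : ∀ A k, 0 ≤ w A k) :
    ∀ᵐ ω ∂P, ∀ A, 0 ≤ p A * ∑ k, w A k * S k ω := by
  obtain ⟨-, hSm, -, -, hS0, -, hSgam, -⟩ := hM
  have hS : ∀ᵐ ω ∂P, ∀ k, 0 ≤ S k ω := by
    refine ae_all_iff.2 fun k => ?_
    induction k using Fin.cases with
    | zero => exact ae_of_all _ fun ω => (hS0 ω).symm ▸ zero_le_one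
    | succ k => exact ae_nonneg_of_map_eq_gammaMeasure (hSm _) (hSgam k)
  filter_upwards [hS] with ω hω A
  exact mul_nonneg (hp A) (sum_nonneg fun k _ => mul_nonneg (hw A k) (hω k))

theorem IsCRModel.lintegral_mul_prod_exposures (hM : IsCRModel P S D E p w shape rate)
    (F : (𝒜 → ℕ) × (Fin (N + 1) → ℝ) → ℝ≥0∞) (hF : Measurable F) (φ : ℕ → ℝ≥0∞)
    (d : 𝒜 → ℕ) :
    ∫⁻ ω, F (fun A => D A ω, fun k => S k ω) * ∏ A, ∏ i ∈ range (d A), φ (E A i ω) ∂P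
      = (∫⁻ ω, F (fun A => D A ω, fun k => S k ω) ∂P)
        * ∏ A, (∫⁻ ω, φ (E A 0 ω) ∂P) ^ d A := by
  classical
  obtain ⟨-, hSm, hDm, hEm, -, -, -, -, hEid, hindep⟩ := hM
  let T : Finset (𝒜 × ℕ) := univ.biUnion fun A => {A} ×ˢ range (d A)
  have hT (f : 𝒜 × ℕ → ℝ≥0∞) : ∏ x ∈ T, f x = ∏ A, ∏ i ∈ range (d A), f (A, i) :=
    prod_finset_product T univ (fun A => range (d A)) (by simp [T])
  have hφE (A : 𝒜) (i : ℕ) : ∫⁻ ω, φ (E A i ω) ∂P = ∫⁻ ω, φ (E A 0 ω) ∂P := by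
    rw [← lintegral_map .of_discrete (hEm A i), hEid, lintegral_map .of_discrete (hEm A 0)]
  have hprod := lintegral_prod_eq_prod_lintegral_of_indepFun
    (insert (.inr ()) (T.map ⟨.inl, Sum.inl_injective⟩)) _
    (hindep.comp (fun j => Sum.rec (fun _ => φ) (fun _ => F) j)
      (by rintro (_ | _); exacts [measurable_from_top, hF]))
    (by rintro (⟨A, i⟩ | _)
        · exact measurable_from_top.comp (hEm A i)
        · exact hF.comp ((measurable_pi_lambda _ hDm).prodMk (measurable_pi_lambda _ hSm)))
  rw [prod_insert (by simp), prod_map] at hprod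
  simpa [hT, hφE] using hprod

theorem IsCRModel.setLIntegral_defaults_mul_prod_exposures
    (hM : IsCRModel P S D E p w shape rate) (d : 𝒜 → ℕ) {G : (Fin (N + 1) → ℝ) → ℝ≥0∞}
    (hG : Measurable G) (ζ : ℝ≥0∞) :
    ∫⁻ ω in {ω | ∀ A, D A ω = d A},
        G (fun k => S k ω) * ∏ A, ∏ i ∈ range (d A), ζ ^ E A i ω ∂P
      = ∫⁻ ω, G (fun k => S k ω) * ∏ A,
          ENNReal.ofReal (poissonPMFReal (defaultIntensity p w A (fun k => S k ω)) (d A))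
            * (∫⁻ ω', ζ ^ E A 0 ω' ∂P) ^ d A ∂P := by
  classical
  have ⟨_, hSm, hDm, _, _, _, _, hcond, _⟩ := hM
  have hSv : Measurable fun ω k => S k ω := measurable_pi_lambda _ hSm
  have hset := measurableSet_defaults hDm d
  have hdensity : Measurable fun ω => ∏ A, ENNReal.ofReal
      (poissonPMFReal (defaultIntensity p w A (fun k => S k ω)) (d A)) :=
    Finset.measurable_prod _ fun A _ => (measurable_ofReal_poissonPMFReal (d A)).comp
      ((measurable_defaultIntensity p w A).comp hSv)
  let F : (𝒜 → ℕ) × (Fin (N + 1) → ℝ) → ℝ≥0∞ := fun x => if x.1 = d then G x.2 else 0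
  have hF : Measurable F :=
    Measurable.ite (measurable_fst (measurableSet_singleton d)) (hG.comp measurable_snd)
      measurable_const
  have hFω (ω : Ω) : F (fun A => D A ω, fun k => S k ω)
      = {ω | ∀ A, D A ω = d A}.indicator (fun ω => G (fun k => S k ω)) ω := by
    simp [F, Set.indicator_apply, funext_iff]
  rw [← lintegral_indicator hset]
  simp only [Set.indicator_mul_left, ← hFω]
  rw [hM.lintegral_mul_prod_exposures F hF (ζ ^ ·) d]
  simp only [hFω, lintegral_indicator hset]
  rw [setLIntegral_comp_eq_lintegral_density_mul hSv hdensity (hcond d) hG,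
    ← lintegral_mul_const]
  · refine lintegral_congr fun ω => ?_
    rw [prod_mul_distrib]
    ring
  · exact hdensity.mul (hG.comp hSv)

theorem IsCRModel.lintegral_mul_pow_portfolioLoss (hM : IsCRModel P S D E p w shape rate)
    (g : (𝒜 → ℕ) → (Fin (N + 1) → ℝ) → ℝ≥0∞) (hg : ∀ d, Measurable (g d)) (ζ : ℝ≥0∞) :
    ∫⁻ ω, g (fun A => D A ω) (fun k => S k ω) * ζ ^ portfolioLoss D E ω ∂P
      = ∫⁻ ω, ∑' d : 𝒜 → ℕ, g d (fun k => S k ω) * ∏ A,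
          ENNReal.ofReal (poissonPMFReal (defaultIntensity p w A (fun k => S k ω)) (d A))
            * (∫⁻ ω', ζ ^ E A 0 ω' ∂P) ^ d A ∂P := by
  have ⟨_, hSm, hDm, hEm, _⟩ := hM
  have hSv : Measurable fun ω k => S k ω := measurable_pi_lambda _ hSm
  have hsplit (ω : Ω) : g (fun A => D A ω) (fun k => S k ω) * ζ ^ portfolioLoss D E ω
      = ∑' d : 𝒜 → ℕ, {ω | ∀ A, D A ω = d A}.indicator
          (fun ω => g d (fun k => S k ω) * ∏ A, ∏ i ∈ range (d A), ζ ^ E A i ω) ω := by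
    rw [tsum_eq_single (fun A => D A ω) fun d hd => Set.indicator_of_notMem
      (fun h => hd (funext fun A => (h A).symm)) _, Set.indicator_of_mem (by exact fun _ => rfl)]
    simp only [portfolioLoss, prod_pow_eq_pow_sum]
  rw [lintegral_congr hsplit, lintegral_tsum, lintegral_tsum]
  · refine tsum_congr fun d => ?_
    rw [lintegral_indicator (measurableSet_defaults hDm d)]
    exact hM.setLIntegral_defaults_mul_prod_exposures d (hg d) ζ
  · exact fun d => ((hg d).comp hSv).mul (Finset.measurable_prod _ fun A _ =>
      ((measurable_ofReal_poissonPMFReal (d A)).comp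
        ((measurable_defaultIntensity p w A).comp hSv)).mul_const _) |>.aemeasurable
  · exact fun d => (((hg d).comp hSv).mul (Finset.measurable_prod _ fun A _ =>
      Finset.measurable_prod _ fun i _ => measurable_from_top.comp (hEm A i))).indicator
      (measurableSet_defaults hDm d) |>.aemeasurable

theorem IsCRModel.lintegral_mul_prod_defaults_mul_pow_portfolioLoss
    (hM : IsCRModel P S D E p w shape rate) (G : (Fin (N + 1) → ℝ) → ℝ≥0∞) (hG : Measurable G)
    (T : Finset 𝒜) (ζ : ℝ≥0∞) :
    ∫⁻ ω, G (fun k => S k ω) * (∏ A ∈ T, (D A ω : ℝ≥0∞)) * ζ ^ portfolioLoss D E ω ∂P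
      = (∏ A ∈ T, ∫⁻ ω, ζ ^ E A 0 ω ∂P)
        * ∫⁻ ω, G (fun k => S k ω)
            * (∏ A ∈ T, (defaultIntensity p w A (fun k => S k ω) : ℝ≥0∞))
            * ∏ A, poissonPGF (defaultIntensity p w A (fun k => S k ω))
                (∫⁻ ω', ζ ^ E A 0 ω' ∂P) ∂P := by
  classical
  have ⟨_, hSm, _⟩ := hM
  have hSv : Measurable fun ω k => S k ω := measurable_pi_lambda _ hSm
  refine (hM.lintegral_mul_pow_portfolioLoss (fun d s => G s * ∏ A ∈ T, (d A : ℝ≥0∞))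
    (fun d => hG.mul_const _) ζ).trans ?_
  rw [← lintegral_const_mul]
  · refine lintegral_congr fun ω => ?_
    simp only [mul_assoc, ENNReal.tsum_mul_left]
    rw [tsum_prod_natCast_mul_prod_poissonPMFReal, prod_mul_distrib]
    ring
  · refine ((hG.comp hSv).mul ?_).mul ?_
    · exact Finset.measurable_prod _ fun A _ =>
        measurable_coe_nnreal_ennreal.comp ((measurable_defaultIntensity p w A).comp hSv)
    · exact Finset.measurable_prod _ fun A _ =>
        (measurable_poissonPGF _).comp ((measurable_defaultIntensity p w A).comp hSv)

end CreditRiskPlus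

theorem double_default_pgf_factorization_general
    {Ω : Type} {𝒜 : Type} [MeasurableSpace Ω] [Fintype 𝒜] {N : ℕ}
    (P : Measure Ω) (S : Fin (N + 1) → Ω → ℝ) (D : 𝒜 → Ω → ℕ) (E : 𝒜 → ℕ → Ω → ℕ)
    (p : 𝒜 → ℝ) (w : 𝒜 → Fin (N + 1) → ℝ) (α : Fin N → ℝ)
    (hp : ∀ A, 0 ≤ p A)
    (hw0 : ∀ A k, 0 ≤ w A k)
    (hM : IsCRModel P S D E p w α α)
    (A1 A2 : 𝒜) (hA12 : A1 ≠ A2) (z : ℝ) (hz : z ∈ Set.Icc (0 : ℝ) 1) :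
    ∫ ω, (D A1 ω : ℝ) * (D A2 ω : ℝ) * z ^ portfolioLoss D E ω ∂P
      = (∫ ω, (p A1 * ∑ k, w A1 k * S k ω) * (p A2 * ∑ k, w A2 k * S k ω)
            * z ^ portfolioLoss D E ω ∂P)
        * pgfN P (E A1 0) z * pgfN P (E A2 0) z := by
  classical
  have ⟨_, hSm, hDm, hEm, _⟩ := hM
  have hX := measurable_portfolioLoss hDm hEm
  have hnonneg := hM.ae_nonneg_intensity hp hw0
  rw [integral_mul_pow_eq_toReal_lintegral (ae_of_all _ fun ω => by positivity) (by fun_prop)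
      hX hz.1,
    integral_mul_pow_eq_toReal_lintegral
      (by filter_upwards [hnonneg] with ω h using mul_nonneg (h A1) (h A2)) (by fun_prop) hX hz.1,
    pgfN_eq_toReal_lintegral (hEm A1 0) hz.1, pgfN_eq_toReal_lintegral (hEm A2 0) hz.1,
    ← ENNReal.toReal_mul, ← ENNReal.toReal_mul]
  congr 1
  have hL := hM.lintegral_mul_prod_defaults_mul_pow_portfolioLoss (fun _ => 1) measurable_const
    {A1, A2} (ENNReal.ofReal z)
  have hR := hM.lintegral_mul_prod_defaults_mul_pow_portfolioLoss
    (fun s => ENNReal.ofReal ((p A1 * ∑ k, w A1 k * s k) * (p A2 * ∑ k, w A2 k * s k)))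
    (by fun_prop) ∅ (ENNReal.ofReal z)
  simp only [prod_pair hA12, prod_empty, one_mul, mul_one] at hL hR
  rw [hR]
  simp only [ENNReal.ofReal_mul (Nat.cast_nonneg _), ENNReal.ofReal_natCast, hL]
  rw [mul_comm, ← mul_assoc]
  congr 2
  refine lintegral_congr_ae ?_
  filter_upwards [hnonneg] with ω h
  rw [ENNReal.ofReal_mul (h A1)]
  rfl

/-- For distinct obligors `A1 ≠ A2` and `z ∈ [0,1]`:
`𝔼[D_{A1} D_{A2} z^X] = 𝔼[p_{A1}^S p_{A2}^S z^X] * H_{A1}(z) * H_{A2}(z)`. -/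
theorem double_default_pgf_factorization
    {Ω : Type} {𝒜 : Type} [MeasurableSpace Ω] [Fintype 𝒜] {N : ℕ} (hN : 1 ≤ N)
    (P : Measure Ω) (S : Fin (N + 1) → Ω → ℝ) (D : 𝒜 → Ω → ℕ) (E : 𝒜 → ℕ → Ω → ℕ)
    (p : 𝒜 → ℝ) (w : 𝒜 → Fin (N + 1) → ℝ) (α : Fin N → ℝ)
    (hα : ∀ k, 0 < α k) (hp : ∀ A, 0 ≤ p A)
    (hw0 : ∀ A k, 0 ≤ w A k) (hw1 : ∀ A k, w A k ≤ 1)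
    (hwsum : ∀ A, ∑ k, w A k = 1)
    (hM : IsCRModel P S D E p w α α)
    (A1 A2 : 𝒜) (hA12 : A1 ≠ A2) (z : ℝ) (hz : z ∈ Set.Icc (0 : ℝ) 1) :
    ∫ ω, (D A1 ω : ℝ) * (D A2 ω : ℝ) * z ^ portfolioLoss D E ω ∂P
      = (∫ ω, (p A1 * ∑ k, w A1 k * S k ω) * (p A2 * ∑ k, w A2 k * S k ω)
            * z ^ portfolioLoss D E ω ∂P)
        * pgfN P (E A1 0) z * pgfN P (E A2 0) z :=
  double_default_pgf_factorization_general P S D E p w α hp hw0 hM A1 A2 hA12 z hz
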